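/- arXiv:1902.03932 — 2 statements merged into one kernel-verified Lean document; each statement's English description precedes it below -/
import Mathlib

section
/- Let A ∈ (0,1) and B, C ≥ 0 with C + √A·B > 0, and let {y_k}_{k≥0} be a sequence of non-negative real numbers satisfying y_{k+1}² ≤ ((1−A)·y_k + C)² + B² for every integer k ≥ 0. Then for every k ≥ 0, y_k ≤ (1−A)^k·y_0 + C/A + B²/(C + √A·B). -/
/-- Recursion lemma (Lemma 1 of the appendix): if `A ∈ (0,1)`, `B, C ≥ 0` with
`C + √A · B > 0`, and the non-negative sequence `{y_k}` satisfies
`y_{k+1}² ≤ ((1-A) y_k + C)² + B²` for all `k ≥ 0`, then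
`y_k ≤ (1-A)^k y_0 + C/A + B²/(C + √A · B)` for every `k ≥ 0`. -/
theorem recursion_lemma (A B C : ℝ) (hA : A ∈ Set.Ioo (0 : ℝ) 1)
    (hB : 0 ≤ B) (hC : 0 ≤ C) (hpos : 0 < C + Real.sqrt A * B)
    (y : ℕ → ℝ) (hy : ∀ k, 0 ≤ y k)
    (hrec : ∀ k : ℕ, (y (k + 1)) ^ 2 ≤ ((1 - A) * y k + C) ^ 2 + B ^ 2) :
    ∀ k : ℕ, y k ≤ (1 - A) ^ k * y 0 + C / A + B ^ 2 / (C + Real.sqrt A * B) := by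
  obtain ⟨hA0, hA1⟩ := hA
  obtain ⟨s, hs_def⟩ : ∃ s, s = Real.sqrt A := ⟨_, rfl⟩
  rw [← hs_def] at hpos ⊢
  have hs0 : 0 ≤ s := hs_def ▸ Real.sqrt_nonneg A
  have hs2 : s ^ 2 = A := hs_def ▸ Real.sq_sqrt hA0.le
  obtain ⟨d, hd_def⟩ : ∃ d, d = B ^ 2 / (C + s * B) := ⟨_, rfl⟩
  rw [← hd_def]
  have hd0 : 0 ≤ d := hd_def ▸ div_nonneg (sq_nonneg B) hpos.le
  have hdP : d * (C + s * B) = B ^ 2 := by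
    rw [hd_def]; exact div_mul_cancel₀ _ (ne_of_gt hpos)
  obtain ⟨c, hc_def⟩ : ∃ c, c = C / A := ⟨_, rfl⟩
  rw [← hc_def]
  have hc0 : 0 ≤ c := hc_def ▸ div_nonneg hC hA0.le
  have hAc : A * c = C := by rw [hc_def]; field_simp
  have h1A : 0 < 1 - A := by linarith
  -- the bracket Q := C + A(2-A)d - sB is nonneg since Q·(C+sB) = C² + A(1-A)B²
  have hQeq : (C + A * (2 - A) * d - s * B) * (C + s * B)
      = C ^ 2 + A * (1 - A) * B ^ 2 := by
    linear_combination (A * (2 - A)) * hdP - B ^ 2 * hs2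
  have hQ0 : 0 ≤ C + A * (2 - A) * d - s * B := by
    nlinarith [hQeq, hpos, sq_nonneg C,
      mul_nonneg (mul_nonneg hA0.le h1A.le) (sq_nonneg B)]
  intro k
  induction k with
  | zero => simp; nlinarith [hy 0]
  | succ k ih =>
    have hE0 : 0 ≤ (1 - A) ^ k * y 0 := mul_nonneg (pow_nonneg h1A.le k) (hy 0)
    set E := (1 - A) ^ k * y 0 with hE_def
    have hT : (1 - A) ^ (k + 1) * y 0 + c + d = (1 - A) * E + (c + d) := by
      rw [hE_def, pow_succ]; ring
    rw [hT]
    have hu0 : 0 ≤ (1 - A) * y k + C :=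
      add_nonneg (mul_nonneg h1A.le (hy k)) hC
    have hu : (1 - A) * y k + C ≤ (1 - A) * (E + c + d) + C := by nlinarith [ih]
    have hkey : ((1 - A) * (E + c + d) + C) ^ 2 + B ^ 2 ≤ ((1 - A) * E + (c + d)) ^ 2 := by
      nlinarith [mul_nonneg hd0 hQ0, hdP, hAc,
        mul_nonneg (mul_nonneg h1A.le hE0) (mul_nonneg hA0.le hd0),
        mul_nonneg hd0 hc0]
    have hsq : (y (k + 1)) ^ 2 ≤ ((1 - A) * E + (c + d)) ^ 2 := by
      calc (y (k + 1)) ^ 2 ≤ ((1 - A) * y k + C) ^ 2 + B ^ 2 := hrec k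
        _ ≤ ((1 - A) * (E + c + d) + C) ^ 2 + B ^ 2 := by
              have := pow_le_pow_left₀ hu0 hu 2
              linarith
        _ ≤ _ := hkey
    have hT0 : 0 ≤ (1 - A) * E + (c + d) :=
      add_nonneg (mul_nonneg h1A.le hE0) (add_nonneg hc0 hd0)
    exact (pow_le_pow_iff_left₀ (hy (k + 1)) hT0 two_ne_zero).mp hsq
end

section
/- Let A ∈ (0,1) and B, C ≥ 0 with C + √A·B > 0, let {ρ_k}_{k≥1} be a sequence with 0 ≤ ρ_k ≤ 1−A for all k, and let {y_k}_{k≥0} be a sequence of non-negative real numbers satisfying y_{k+1}² ≤ (ρ_{k+1}·y_k + C)² + B² for every integer k ≥ 0. Then for every k ≥ 0, y_k ≤ (1−A)^k·y_0 + C/A + B²/(C + √A·B). -/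
/-- Variable-contraction-factor recursion lemma: if `A ∈ (0,1)`, `B, C ≥ 0` with
`C + √A · B > 0`, the factors `ρ_k` satisfy `0 ≤ ρ_k ≤ 1 - A` for all `k ≥ 1`, and the
non-negative sequence `{y_k}` satisfies `y_{k+1}² ≤ (ρ_{k+1} y_k + C)² + B²` for all
`k ≥ 0`, then `y_k ≤ (1-A)^k y_0 + C/A + B²/(C + √A · B)` for every `k ≥ 0`. -/
theorem recursion_lemma_variable (A B C : ℝ) (hA : A ∈ Set.Ioo (0 : ℝ) 1)
    (hB : 0 ≤ B) (hC : 0 ≤ C) (hpos : 0 < C + Real.sqrt A * B)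
    (ρ : ℕ → ℝ) (hρ : ∀ k : ℕ, 1 ≤ k → 0 ≤ ρ k ∧ ρ k ≤ 1 - A)
    (y : ℕ → ℝ) (hy : ∀ k, 0 ≤ y k)
    (hrec : ∀ k : ℕ, (y (k + 1)) ^ 2 ≤ (ρ (k + 1) * y k + C) ^ 2 + B ^ 2) :
    ∀ k : ℕ, y k ≤ (1 - A) ^ k * y 0 + C / A + B ^ 2 / (C + Real.sqrt A * B) := by
  obtain ⟨hA0, hA1⟩ := hA
  obtain ⟨s, hs⟩ : ∃ s, s = Real.sqrt A := ⟨_, rfl⟩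
  rw [← hs] at hpos ⊢
  have hs0 : 0 < s := hs ▸ Real.sqrt_pos.mpr hA0
  have hs2 : s ^ 2 = A := hs ▸ Real.sq_sqrt hA0.le
  obtain ⟨E, hE⟩ : ∃ E, E = B ^ 2 / (C + s * B) := ⟨_, rfl⟩
  have hE0 : 0 ≤ E := hE ▸ div_nonneg (sq_nonneg B) hpos.le
  have hEeq : E * (C + s * B) = B ^ 2 := by rw [hE]; exact div_mul_cancel₀ _ hpos.ne'
  obtain ⟨D, hD⟩ : ∃ D, D = C / A + E := ⟨_, rfl⟩
  have hCA : A * (C / A) = C := mul_div_cancel₀ C hA0.ne'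
  have hD0 : 0 ≤ D := hD ▸ add_nonneg (div_nonneg hC hA0.le) hE0
  have hAD : A * D - C = A * E := by rw [hD, mul_add, hCA]; ring
  have hADC : 0 ≤ A * D - C := by rw [hAD]; exact mul_nonneg hA0.le hE0
  have key2 : B ^ 2 ≤ (A * D - C) * ((2 - A) * D + C) := by
    rw [hAD, hD]
    have expand : A * E * ((2 - A) * (C / A + E) + C) = 2 * C * E + A * (2 - A) * E ^ 2 := by
      field_simp; ring
    rw [expand]
    -- suffices: E*(C + s*B) ≤ 2*C*E + A*(2-A)*E^2, using B^2 = E*(C+s*B)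
    rw [← hEeq]
    nlinarith [sq_nonneg (B - s * E), hs2,
      mul_nonneg (mul_nonneg (by linarith : (0:ℝ) ≤ 1 - A) hA0.le) (sq_nonneg E)]
  suffices h : ∀ k, y k ≤ (1 - A) ^ k * y 0 + D by
    intro k; have := h k; rw [hD, hE] at this; linarith
  intro k
  induction k with
  | zero => simp only [pow_zero, one_mul]; exact le_add_of_nonneg_right hD0
  | succ k ih =>
    have ht : 0 ≤ (1 - A) ^ k * y 0 :=
      mul_nonneg (pow_nonneg (by linarith) k) (hy 0)
    obtain ⟨hρ0, hρ1⟩ := hρ (k + 1) (by omega)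
    have h1 : ρ (k + 1) * y k + C ≤ (1 - A) * ((1 - A) ^ k * y 0 + D) + C := by
      have : ρ (k + 1) * y k ≤ (1 - A) * ((1 - A) ^ k * y 0 + D) := by
        calc ρ (k + 1) * y k ≤ (1 - A) * y k := mul_le_mul_of_nonneg_right hρ1 (hy k)
          _ ≤ (1 - A) * ((1 - A) ^ k * y 0 + D) :=
            mul_le_mul_of_nonneg_left ih (by linarith)
      linarith
    have h0 : 0 ≤ ρ (k + 1) * y k + C := add_nonneg (mul_nonneg hρ0 (hy k)) hC
    have hsq : (y (k + 1)) ^ 2 ≤ ((1 - A) * ((1 - A) ^ k * y 0 + D) + C) ^ 2 + B ^ 2 := by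
      have := hrec k
      nlinarith [pow_le_pow_left₀ h0 h1 2]
    have hT : y (k + 1) ≤ (1 - A) ^ (k + 1) * y 0 + D := by
      have hTnn : 0 ≤ (1 - A) ^ (k + 1) * y 0 + D :=
        add_nonneg (mul_nonneg (pow_nonneg (by linarith) _) (hy 0)) hD0
      have hTsq : ((1 - A) * ((1 - A) ^ k * y 0 + D) + C) ^ 2 + B ^ 2
          ≤ ((1 - A) ^ (k + 1) * y 0 + D) ^ 2 := by
        have hpow : (1 - A) ^ (k + 1) = (1 - A) * (1 - A) ^ k := by ring
        rw [hpow, mul_assoc]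
        generalize hgt : (1 - A) ^ k * y 0 = t at ht ⊢
        nlinarith [key2, mul_nonneg (mul_nonneg hADC (show (0:ℝ) ≤ 1 - A by linarith)) ht]
      have hy2 : y (k + 1) ^ 2 ≤ ((1 - A) ^ (k + 1) * y 0 + D) ^ 2 := le_trans hsq hTsq
      exact (pow_le_pow_iff_left₀ (hy _) hTnn two_ne_zero).mp hy2
    exact hT
end
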